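/- arXiv:2310.01048 — 5 statements merged into one kernel-verified Lean document; each statement's English description precedes it below -/
import Mathlib

section
/- Existence of the corrector with gradient bounds (Proposition 1.2, existence part): Let μ ≥ 1, let ν, a : ℝ → ℝ be continuous with 1/μ ≤ ν(x) ≤ μ and 1/μ ≤ a(x) ≤ μ for all x, and let W be a real constant. Then there exists a differentiable function T : ℝ → ℝ with T(0) = 0 such that the function x ↦ a(x)ν(x)T'(x) is differentiable with derivative equal to W·T'(x) − W·ν(x) at every x (i.e. −(aνT')' + WT' = Wν pointwise on ℝ), and such that 1/μ⁵ ≤ T'(x) ≤ μ⁵ for all x ∈ ℝ (in particular |T(x)| ≤ μ⁵|x| for all x, so T(x)/|x| is bounded). -/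
open MeasureTheory Filter

/-- Two-sided ellipticity bounds `1/μ ≤ f ≤ μ`. -/
def Elliptic (μ : ℝ) (f : ℝ → ℝ) : Prop := ∀ x : ℝ, 1 / μ ≤ f x ∧ f x ≤ μ

/-- A classical solution of the canonical equation
`ν(x)∂ₜp − ∂ₓ(ν(x)a(x)∂ₓp) + W∂ₓp = 0` for every time `t ∈ s` and every `x ∈ ℝ`. -/
def IsCanonicalSolOn (ν a : ℝ → ℝ) (W : ℝ) (u : ℝ → ℝ → ℝ) (s : Set ℝ) : Prop :=
  ∃ ut ux q : ℝ → ℝ → ℝ, ∀ t ∈ s, ∀ x : ℝ,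
    HasDerivAt (fun τ => u τ x) (ut t x) t ∧
    HasDerivAt (fun ξ => u t ξ) (ux t x) x ∧
    HasDerivAt (fun ξ => ν ξ * a ξ * ux t ξ) (q t x) x ∧
    ν x * ut t x - q t x + W * ux t x = 0

/-- A corrector: `T(0) = 0`, `−(aνT')' + WT' = Wν` and `1/μ⁵ ≤ T' ≤ μ⁵`. -/
def IsCorrector (μ : ℝ) (ν a : ℝ → ℝ) (W : ℝ) (T : ℝ → ℝ) : Prop :=
  T 0 = 0 ∧ ∃ T' : ℝ → ℝ,
    (∀ x, HasDerivAt T (T' x) x) ∧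
    (∀ x, HasDerivAt (fun y => a y * ν y * T' y) (W * T' x - W * ν x) x) ∧
    (∀ x, 1 / μ ^ 5 ≤ T' x ∧ T' x ≤ μ ^ 5)

/-- An adjoint corrector: `T̃(0) = 0`, `(aνT̃')' + WT̃' = Wν` and `1/μ⁵ ≤ T̃' ≤ μ⁵`. -/
def IsAdjointCorrector (μ : ℝ) (ν a : ℝ → ℝ) (W : ℝ) (T : ℝ → ℝ) : Prop :=
  T 0 = 0 ∧ ∃ T' : ℝ → ℝ,
    (∀ x, HasDerivAt T (T' x) x) ∧
    (∀ x, HasDerivAt (fun y => a y * ν y * T' y) (W * ν x - W * T' x) x) ∧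
    (∀ x, 1 / μ ^ 5 ≤ T' x ∧ T' x ≤ μ ^ 5)

/-- A fundamental solution of the canonical equation. -/
def IsFundSol (ν a : ℝ → ℝ) (W : ℝ) (P : ℝ → ℝ → ℝ → ℝ) : Prop :=
  (∀ y : ℝ, IsCanonicalSolOn ν a W (fun t x => P t x y) (Set.Ioi 0)) ∧
  (∀ y : ℝ, ∀ t : ℝ, 0 < t → ∀ x : ℝ, 0 ≤ P t x y) ∧
  (∀ y : ℝ, ∀ t : ℝ, 0 < t → ∫ x : ℝ, ν x * P t x y = 1) ∧
  (∀ y : ℝ, ∀ φ : ℝ → ℝ, Continuous φ → (∃ B : ℝ, ∀ x, |φ x| ≤ B) →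
    Tendsto (fun t => ∫ x : ℝ, ν x * P t x y * φ x)
      (nhdsWithin 0 (Set.Ioi 0)) (nhds (φ y))) ∧
  (∀ s t : ℝ, 0 < s → 0 < t → ∀ x y : ℝ,
    P (t + s) x y = ∫ z : ℝ, ν z * P t x z * P s z y)

/-!
The flux `g = aνT'` has to solve the linear equation `g' = W g / (aν) - W ν`. For `W > 0` its
bounded solution is `g x = W ∫_x^∞ ν y exp (-W (B y - B x)) dy` with `B' = 1 / (aν)`. Since
`μ⁻² ≤ B' ≤ μ²`, the kernel is squeezed between the exponentials of rates `W μ²` and `W / μ²`,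
whose integrals give `μ⁻³ ≤ g ≤ μ³`, hence `μ⁻⁵ ≤ T' = g / (aν) ≤ μ⁵`. The reflection `x ↦ -x`
turns `W < 0` into `W > 0`, and for `W = 0` the flux `g = 1` works.
-/

open Set Real

namespace Elliptic

variable {α β : ℝ} {f g : ℝ → ℝ}

lemma pos (hα : 0 < α) (hf : Elliptic α f) (x : ℝ) : 0 < f x :=
  (one_div_pos.2 hα).trans_le (hf x).1

lemma one_le (hα : 0 < α) (hf : Elliptic α f) : 1 ≤ α := by
  have h := (hf 0).1.trans (hf 0).2
  rw [div_le_iff₀ hα] at h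
  nlinarith

lemma mul (hα : 0 < α) (hβ : 0 < β) (hf : Elliptic α f) (hg : Elliptic β g) :
    Elliptic (α * β) fun x => f x * g x := fun x =>
  ⟨by
    rw [← one_div_mul_one_div]
    exact mul_le_mul (hf x).1 (hg x).1 (by positivity) (hf.pos hα x).le,
   mul_le_mul (hf x).2 (hg x).2 (hg.pos hβ x).le hα.le⟩

lemma sub_bounds_of_hasDerivAt {B : ℝ → ℝ} (hB : ∀ x, HasDerivAt B (f x) x) (hf : Elliptic α f)
    {x y : ℝ} (hxy : x ≤ y) : 1 / α * (y - x) ≤ B y - B x ∧ B y - B x ≤ α * (y - x) :=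
  have hBd : Differentiable ℝ B := fun x => (hB x).differentiableAt
  ⟨mul_sub_le_image_sub_of_le_deriv hBd (fun x => (hB x).deriv ▸ (hf x).1) hxy,
   image_sub_le_mul_sub_of_deriv_le hBd (fun x => (hB x).deriv ▸ (hf x).2) hxy⟩

lemma inv (hα : 0 < α) (hf : Elliptic α f) : Elliptic α fun x => (f x)⁻¹ := fun x =>
  ⟨by simpa only [one_div] using inv_anti₀ (hf.pos hα x) (hf x).2,
   by simpa only [one_div, inv_inv] using inv_anti₀ (by positivity) (hf x).1⟩

end Elliptic

section ExponentialTail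

variable {φ : ℝ → ℝ} {c K x : ℝ}

lemma exp_neg_mul_sub_eq (c x y : ℝ) : exp (-c * (y - x)) = exp (c * x) * exp (-c * y) := by
  rw [← exp_add]; ring_nf

lemma integrableOn_Ioi_exp_neg_mul_sub (hc : 0 < c) (x : ℝ) :
    IntegrableOn (fun y => exp (-c * (y - x))) (Ioi x) := by
  simp_rw [exp_neg_mul_sub_eq c x]
  exact (integrableOn_exp_mul_Ioi (neg_neg_of_pos hc) x).const_mul _

lemma integral_Ioi_exp_neg_mul_sub (hc : 0 < c) (x : ℝ) :
    ∫ y in Ioi x, exp (-c * (y - x)) = c⁻¹ := by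
  simp_rw [exp_neg_mul_sub_eq c x]
  rw [integral_const_mul, integral_exp_mul_Ioi (neg_neg_of_pos hc), mul_div_assoc', mul_neg,
    neg_div_neg_eq, ← exp_add, neg_mul, add_neg_cancel, exp_zero, one_div]

lemma integrableOn_Ioi_of_le_exp (hφ : AEStronglyMeasurable φ (volume.restrict (Ioi x)))
    (hc : 0 < c) (h : ∀ y ∈ Ioi x, 0 ≤ φ y ∧ φ y ≤ K * exp (-c * (y - x))) :
    IntegrableOn φ (Ioi x) := by
  refine ((integrableOn_Ioi_exp_neg_mul_sub hc x).const_mul K).mono' hφ ?_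
  filter_upwards [ae_restrict_mem measurableSet_Ioi] with y hy
  rw [Real.norm_of_nonneg (h y hy).1]
  exact (h y hy).2

lemma setIntegral_Ioi_le_of_le_exp (hφ : IntegrableOn φ (Ioi x)) (hc : 0 < c)
    (h : ∀ y ∈ Ioi x, φ y ≤ K * exp (-c * (y - x))) : ∫ y in Ioi x, φ y ≤ K / c := by
  calc ∫ y in Ioi x, φ y ≤ ∫ y in Ioi x, K * exp (-c * (y - x)) :=
        setIntegral_mono_on hφ ((integrableOn_Ioi_exp_neg_mul_sub hc x).const_mul K)
          measurableSet_Ioi h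
    _ = K / c := by rw [integral_const_mul, integral_Ioi_exp_neg_mul_sub hc, div_eq_mul_inv]

lemma le_setIntegral_Ioi_of_exp_le (hφ : IntegrableOn φ (Ioi x)) (hc : 0 < c)
    (h : ∀ y ∈ Ioi x, K * exp (-c * (y - x)) ≤ φ y) : K / c ≤ ∫ y in Ioi x, φ y := by
  calc K / c = ∫ y in Ioi x, K * exp (-c * (y - x)) := by
        rw [integral_const_mul, integral_Ioi_exp_neg_mul_sub hc, div_eq_mul_inv]
    _ ≤ ∫ y in Ioi x, φ y :=
        setIntegral_mono_on ((integrableOn_Ioi_exp_neg_mul_sub hc x).const_mul K) hφ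
          measurableSet_Ioi h

end ExponentialTail

lemma hasDerivAt_integral_Ioi {E : Type*} [NormedAddCommGroup E] [NormedSpace ℝ E]
    [CompleteSpace E] {f : ℝ → E} (hf : Continuous f) (hint : ∀ x, IntegrableOn f (Ioi x))
    (x : ℝ) : HasDerivAt (fun x => ∫ y in Ioi x, f y) (-f x) x := by
  have hsplit :
      (fun x => ∫ y in Ioi x, f y) = fun x => (∫ y in Ioi 0, f y) - ∫ y in 0..x, f y := by
    funext x
    rw [← intervalIntegral.integral_Ioi_sub_Ioi' (hint 0) (hint x), sub_sub_cancel]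
  rw [hsplit]
  exact (hf.integral_hasStrictDerivAt 0 x).hasDerivAt.const_sub _

section Flux

lemma Elliptic.mul_exp_neg_mul_sub_bounds {α β W x y : ℝ} {f b B : ℝ → ℝ} (hα : 0 < α)
    (hf : Elliptic α f) (hb : Elliptic β b) (hB : ∀ x, HasDerivAt B (b x) x) (hW : 0 ≤ W)
    (hxy : x ≤ y) :
    1 / α * exp (-(W * β) * (y - x)) ≤ f y * exp (-W * (B y - B x)) ∧
      f y * exp (-W * (B y - B x)) ≤ α * exp (-(W / β) * (y - x)) := by
  obtain ⟨hlo, hhi⟩ := hb.sub_bounds_of_hasDerivAt hB hxy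
  refine ⟨mul_le_mul (hf y).1 (exp_le_exp.2 ?_) (exp_pos _).le (hf.pos hα y).le,
    mul_le_mul (hf y).2 (exp_le_exp.2 ?_) (exp_pos _).le hα.le⟩
  · nlinarith
  · have := mul_le_mul_of_nonneg_left hlo hW
    rw [div_eq_mul_one_div W β]
    nlinarith

lemma mul_setIntegral_Ioi_bounds_of_exp_bounds {α β W x : ℝ} {φ : ℝ → ℝ} (hβ : 0 < β) (hα : 0 < α)
    (hW : 0 < W) (hφ : IntegrableOn φ (Ioi x))
    (h : ∀ y ∈ Ioi x,
      1 / α * exp (-(W * β) * (y - x)) ≤ φ y ∧ φ y ≤ α * exp (-(W / β) * (y - x))) :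
    1 / (β * α) ≤ W * ∫ y in Ioi x, φ y ∧ W * ∫ y in Ioi x, φ y ≤ β * α := by
  constructor
  · calc 1 / (β * α)
        _ = W * (1 / α / (W * β)) := by field_simp
        _ ≤ W * ∫ y in Ioi x, φ y := by
          gcongr
          exact le_setIntegral_Ioi_of_exp_le hφ (by positivity) fun y hy => (h y hy).1
  · calc W * ∫ y in Ioi x, φ y
        _ ≤ W * (α / (W / β)) := by
          gcongr
          exact setIntegral_Ioi_le_of_le_exp hφ (by positivity) fun y hy => (h y hy).2
        _ = β * α := by field_simp

variable {β μ W : ℝ} {b ν : ℝ → ℝ}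

theorem exists_flux_of_pos (hβ : 0 < β) (hμ : 0 < μ) (hbc : Continuous b) (hνc : Continuous ν)
    (hb : Elliptic β b) (hν : Elliptic μ ν) (hW : 0 < W) :
    ∃ g : ℝ → ℝ, (∀ x, HasDerivAt g (W * (b x * g x) - W * ν x) x) ∧ Elliptic (β * μ) g := by
  set B : ℝ → ℝ := fun x => ∫ t in (0 : ℝ)..x, b t
  have hB (x : ℝ) : HasDerivAt B (b x) x := (hbc.integral_hasStrictDerivAt 0 x).hasDerivAt
  have hBc : Continuous B := continuous_iff_continuousAt.2 fun x => (hB x).continuousAt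
  -- `K x` is the integrand of `g x = W * ∫ y in Ioi x, K x y`
  set K : ℝ → ℝ → ℝ := fun x y => ν y * exp (-W * (B y - B x))
  have hK (x : ℝ) : ∀ y ∈ Ioi x,
      1 / μ * exp (-(W * β) * (y - x)) ≤ K x y ∧ K x y ≤ μ * exp (-(W / β) * (y - x)) :=
    fun y hy => hν.mul_exp_neg_mul_sub_bounds hμ hb hB hW.le hy.le
  have hKint (x : ℝ) : IntegrableOn (K x) (Ioi x) :=
    integrableOn_Ioi_of_le_exp
      (hνc.mul (continuous_const.mul (hBc.sub continuous_const)).rexp).aestronglyMeasurable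
      (by positivity) fun y hy => ⟨(mul_pos (hν.pos hμ y) (exp_pos _)).le, (hK x y hy).2⟩
  set f : ℝ → ℝ := fun y => ν y * exp (-W * B y)
  have hKf (x y : ℝ) : K x y = exp (W * B x) * f y := by
    simp only [K, f]; rw [mul_left_comm, ← exp_add]; ring_nf
  have hfint (x : ℝ) : IntegrableOn f (Ioi x) := by
    have hfK : f = fun y => exp (-W * B x) * K x y := by
      funext y
      rw [hKf, ← mul_assoc, ← exp_add, neg_mul, neg_add_cancel, exp_zero, one_mul]
    rw [hfK]
    exact (hKint x).const_mul _
  refine ⟨fun x => W * exp (W * B x) * ∫ y in Ioi x, f y, fun x => ?_, fun x => ?_⟩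
  · have hfc : Continuous f := hνc.mul (continuous_const.mul hBc).rexp
    refine ((((hB x).const_mul W).exp.const_mul W).mul
      (hasDerivAt_integral_Ioi hfc hfint x)).congr_deriv ?_
    have hexp : exp (W * B x) * exp (-W * B x) = 1 := by
      rw [← exp_add, neg_mul, add_neg_cancel, exp_zero]
    linear_combination (-W * ν x) * hexp
  · have hg : W * exp (W * B x) * ∫ y in Ioi x, f y = W * ∫ y in Ioi x, K x y := by
      simp_rw [hKf, integral_const_mul, mul_assoc]
    dsimp only
    rw [hg]
    exact mul_setIntegral_Ioi_bounds_of_exp_bounds hβ hμ hW (hKint x) (hK x)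

theorem exists_flux (hβ : 0 < β) (hμ : 0 < μ) (hbc : Continuous b) (hνc : Continuous ν)
    (hb : Elliptic β b) (hν : Elliptic μ ν) (W : ℝ) :
    ∃ g : ℝ → ℝ, (∀ x, HasDerivAt g (W * (b x * g x) - W * ν x) x) ∧ Elliptic (β * μ) g := by
  rcases lt_trichotomy W 0 with hW | rfl | hW
  · obtain ⟨g, hg', hg⟩ := exists_flux_of_pos hβ hμ (hbc.comp continuous_neg)
      (hνc.comp continuous_neg) (fun x => hb (-x)) (fun x => hν (-x)) (neg_pos.2 hW)
    refine ⟨fun x => g (-x), fun x => ?_, fun x => hg (-x)⟩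
    refine ((hg' (-x)).scomp x (hasDerivAt_neg x)).congr_deriv ?_
    simp only [Function.comp_apply, neg_neg, smul_eq_mul]
    ring
  · have hβμ : 1 ≤ β * μ := one_le_mul_of_one_le_of_one_le (hb.one_le hβ) (hν.one_le hμ)
    refine ⟨fun _ => 1, fun x => by simpa using hasDerivAt_const x (1 : ℝ), fun _ => ?_⟩
    exact ⟨(div_le_one (by positivity)).2 hβμ, hβμ⟩
  · exact exists_flux_of_pos hβ hμ hbc hνc hb hν hW

end Flux

/-- Proposition 1.2 (existence part): there exists a corrector `T`, i.e. a differentiable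
function with `T(0) = 0`, `−(aνT')' + WT' = Wν` pointwise, and `1/μ⁵ ≤ T' ≤ μ⁵`. -/
theorem corrector_exists (μ : ℝ) (hμ : 1 ≤ μ) (ν a : ℝ → ℝ)
    (hνc : Continuous ν) (hac : Continuous a)
    (hν : Elliptic μ ν) (ha : Elliptic μ a) (W : ℝ) :
    ∃ T T' : ℝ → ℝ, T 0 = 0 ∧
      (∀ x, HasDerivAt T (T' x) x) ∧
      (∀ x, HasDerivAt (fun y => a y * ν y * T' y) (W * T' x - W * ν x) x) ∧
      (∀ x, 1 / μ ^ 5 ≤ T' x ∧ T' x ≤ μ ^ 5) := by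
  have hμ0 : 0 < μ := zero_lt_one.trans_le hμ
  have haν := ha.mul hμ0 hμ0 hν
  have hb := haν.inv (by positivity)
  have hbc : Continuous fun x => (a x * ν x)⁻¹ :=
    (hac.mul hνc).inv₀ fun x => (haν.pos (by positivity) x).ne'
  obtain ⟨g, hg', hg⟩ := exists_flux (by positivity) hμ0 hbc hνc hb hν W
  have hT'c : Continuous fun x => (a x * ν x)⁻¹ * g x :=
    hbc.mul (continuous_iff_continuousAt.2 fun x => (hg' x).continuousAt)
  refine ⟨fun x => ∫ t in (0 : ℝ)..x, (a t * ν t)⁻¹ * g t, fun x => (a x * ν x)⁻¹ * g x,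
    intervalIntegral.integral_same, fun x => (hT'c.integral_hasStrictDerivAt 0 x).hasDerivAt,
    fun x => ?_, ?_⟩
  · simp_rw [mul_inv_cancel_left₀ (haν.pos (by positivity) _).ne']
    exact hg' x
  · have := hb.mul (by positivity) (by positivity) hg
    rwa [show μ * μ * (μ * μ * μ) = μ ^ 5 by ring] at this
end

section
/- The travelling corrector profile solves the canonical equation (Lemma 2.4): Let μ ≥ 1, ν, a : ℝ → ℝ continuous with 1/μ ≤ ν(x) ≤ μ and 1/μ ≤ a(x) ≤ μ for all x, W ≥ 0 a real constant, and let T be a corrector; set m := 1/μ⁵ and M := μ⁵, define f(t,x) := T(x) − W t, and for t, y ∈ ℝ let X(t;y) be the unique real with T(X(t;y)) = T(y) + W t. Then: (i) f is a classical solution of the canonical equation on ℝ × ℝ, i.e. ν(x)∂ₜf − ∂ₓ(ν(x)a(x)∂ₓf) + W∂ₓf = 0 for all t, x; (ii) for each t, y ∈ ℝ, X(t;y) is the unique real x with f(t,x) = f(0,y); (iii) m|x| ≤ |f(t, x + X(t;y)) − f(0,y)| ≤ M|x| for all t, x, y ∈ ℝ; (iv) for each y the map t ↦ X(t;y) is differentiable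 with W/M ≤ ∂ₜX(t;y) ≤ W/m for all t. -/
open MeasureTheory Filter

/-!
Since `T' ≥ 1/μ⁵ > 0`, `T` is strictly increasing and bi-Lipschitz with constants `1/μ⁵`
and `μ⁵`. The profile `T x - W t` solves the equation because `∂ₜ = -W` and the corrector
equation is exactly the spatial part. The level curve `t ↦ X(t;y)` of `T(X) = T(y) + W t` is
Lipschitz by the lower bound on `T'`, so the inverse function rule gives `∂ₜX = W / T'(X)`.
-/

section BiLipschitz

variable {f f' : ℝ → ℝ} {m M : ℝ}

lemma mul_abs_sub_le_abs_image_sub (hf : ∀ x, HasDerivAt f (f' x) x) (hm : ∀ x, m ≤ f' x)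
    (x y : ℝ) : m * |y - x| ≤ |f y - f x| := by
  wlog hxy : x ≤ y generalizing x y
  · rw [abs_sub_comm, abs_sub_comm (f y)]
    exact this y x (le_of_not_ge hxy)
  have hdiff : Differentiable ℝ f := fun z => (hf z).differentiableAt
  calc m * |y - x| = m * (y - x) := by rw [abs_of_nonneg (sub_nonneg.2 hxy)]
    _ ≤ f y - f x := mul_sub_le_image_sub_of_le_deriv hdiff (fun z => (hf z).deriv ▸ hm z) hxy
    _ ≤ |f y - f x| := le_abs_self _

lemma abs_image_sub_le_mul_abs_sub (hf : ∀ x, HasDerivAt f (f' x) x) (hM : ∀ x, |f' x| ≤ M)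
    (x y : ℝ) : |f y - f x| ≤ M * |y - x| :=
  convex_univ.norm_image_sub_le_of_norm_hasDerivWithin_le (fun z _ => (hf z).hasDerivWithinAt)
    (fun z _ => hM z) (Set.mem_univ x) (Set.mem_univ y)

lemma injective_of_pos_le_deriv (hf : ∀ x, HasDerivAt f (f' x) x) (hm0 : 0 < m)
    (hm : ∀ x, m ≤ f' x) : Function.Injective f :=
  (strictMono_of_deriv_pos fun x => (hf x).deriv ▸ hm0.trans_le (hm x)).injective

variable {X : ℝ → ℝ} {c W : ℝ}

lemma lipschitzWith_of_apply_eq_add_mul (hf : ∀ x, HasDerivAt f (f' x) x) (hm0 : 0 < m)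
    (hm : ∀ x, m ≤ f' x) (hX : ∀ t, f (X t) = c + W * t) :
    LipschitzWith (Real.toNNReal (|W| / m)) X := by
  refine LipschitzWith.of_dist_le' fun s t => ?_
  rw [Real.dist_eq, Real.dist_eq, div_mul_eq_mul_div, le_div_iff₀ hm0, mul_comm]
  calc m * |X s - X t| ≤ |f (X s) - f (X t)| := mul_abs_sub_le_abs_image_sub hf hm _ _
    _ = |W| * |s - t| := by rw [hX, hX, ← abs_mul]; ring_nf

lemma hasDerivAt_of_apply_eq_add_mul (hf : ∀ x, HasDerivAt f (f' x) x) (hm0 : 0 < m)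
    (hm : ∀ x, m ≤ f' x) (hX : ∀ t, f (X t) = c + W * t) (t : ℝ) :
    HasDerivAt X (W / f' (X t)) t := by
  rcases eq_or_ne W 0 with rfl | hW
  · have hconst : X = fun _ => X t :=
      funext fun s => injective_of_pos_le_deriv hf hm0 hm (by simp [hX])
    rw [hconst, zero_div]
    exact hasDerivAt_const t (X t)
  · have hlevel : HasDerivAt (fun x => (f x - c) / W) (f' (X t) / W) (X t) :=
      ((hf (X t)).sub_const c).div_const W
    have hinv := hlevel.of_local_left_inverse
      (lipschitzWith_of_apply_eq_add_mul hf hm0 hm hX).continuous.continuousAt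
      (div_ne_zero (hm0.trans_le (hm _)).ne' hW)
      (Eventually.of_forall fun s => by rw [hX, add_sub_cancel_left, mul_div_cancel_left₀ _ hW])
    rwa [inv_div] at hinv

end BiLipschitz

lemma IsCorrector.isCanonicalSolOn_profile {μ W : ℝ} {ν a T : ℝ → ℝ}
    (hT : IsCorrector μ ν a W T) :
    IsCanonicalSolOn ν a W (fun t x => T x - W * t) Set.univ := by
  obtain ⟨-, T', hT', hflux, -⟩ := hT
  refine ⟨fun _ _ => -W, fun _ x => T' x, fun _ x => W * T' x - W * ν x,
    fun t _ x => ⟨?_, (hT' x).sub_const _, ?_, by ring⟩⟩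
  · simpa using ((hasDerivAt_id t).const_mul W).const_sub (T x)
  · simpa only [mul_comm (ν _)] using hflux x

theorem corrector_profile_solution_general (μ : ℝ) (hμ : 1 ≤ μ) (ν a : ℝ → ℝ)
    (W : ℝ) (hW : 0 ≤ W)
    (T : ℝ → ℝ) (hT : IsCorrector μ ν a W T)
    (X : ℝ → ℝ → ℝ) (hX : ∀ t y : ℝ, T (X t y) = T y + W * t) :
    IsCanonicalSolOn ν a W (fun t x => T x - W * t) Set.univ ∧
    (∀ t y x : ℝ, (T x - W * t = T y - W * 0) ↔ x = X t y) ∧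
    (∀ t x y : ℝ,
      1 / μ ^ 5 * |x| ≤ |(T (x + X t y) - W * t) - (T y - W * 0)| ∧
      |(T (x + X t y) - W * t) - (T y - W * 0)| ≤ μ ^ 5 * |x|) ∧
    (∃ X' : ℝ → ℝ → ℝ, ∀ t y : ℝ,
      HasDerivAt (fun τ => X τ y) (X' t y) t ∧
      W / μ ^ 5 ≤ X' t y ∧ X' t y ≤ W / (1 / μ ^ 5)) := by
  obtain ⟨-, T', hT', -, hT'b⟩ := id hT
  have hm0 : 0 < 1 / μ ^ 5 := by have := zero_lt_one.trans_le hμ; positivity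
  have hm : ∀ x, 1 / μ ^ 5 ≤ T' x := fun x => (hT'b x).1
  have hM : ∀ x, |T' x| ≤ μ ^ 5 := fun x =>
    abs_le.2 ⟨by linarith [hm x, (hT'b x).2], (hT'b x).2⟩
  have hshift : ∀ t x y, (T (x + X t y) - W * t) - (T y - W * 0) = T (x + X t y) - T (X t y) :=
    fun t x y => by rw [hX]; ring
  refine ⟨hT.isCanonicalSolOn_profile, fun t y x => ?_, fun t x y => ?_,
    ⟨fun t y => W / T' (X t y), fun t y => ⟨?_, ?_, ?_⟩⟩⟩
  · rw [← (injective_of_pos_le_deriv hT' hm0 hm).eq_iff (a := x), hX]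
    constructor <;> intro h <;> linarith
  · rw [hshift]
    have hlower := mul_abs_sub_le_abs_image_sub hT' hm (X t y) (x + X t y)
    have hupper := abs_image_sub_le_mul_abs_sub hT' hM (X t y) (x + X t y)
    rw [add_sub_cancel_right] at hlower hupper
    exact ⟨hlower, hupper⟩
  · exact hasDerivAt_of_apply_eq_add_mul hT' hm0 hm (hX · y) t
  · exact div_le_div_of_nonneg_left hW (hm0.trans_le (hm _)) (hT'b _).2
  · exact div_le_div_of_nonneg_left hW hm0 (hm _)

/-- Lemma 2.4: the profile `f(t,x) = T(x) − Wt` built from a corrector `T` is a global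
classical solution of the canonical equation; `X(t;y)` is the unique root of
`f(t,·) − f(0,y)`; `m|x| ≤ |f(t, x + X(t;y)) − f(0,y)| ≤ M|x|` with `m = 1/μ⁵`,
`M = μ⁵`; and `t ↦ X(t;y)` is differentiable with `W/M ≤ ∂ₜX ≤ W/m`. -/
theorem corrector_profile_solution (μ : ℝ) (hμ : 1 ≤ μ) (ν a : ℝ → ℝ)
    (hνc : Continuous ν) (hac : Continuous a)
    (hν : Elliptic μ ν) (ha : Elliptic μ a) (W : ℝ) (hW : 0 ≤ W)
    (T : ℝ → ℝ) (hT : IsCorrector μ ν a W T)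
    (X : ℝ → ℝ → ℝ) (hX : ∀ t y : ℝ, T (X t y) = T y + W * t) :
    IsCanonicalSolOn ν a W (fun t x => T x - W * t) Set.univ ∧
    (∀ t y x : ℝ, (T x - W * t = T y - W * 0) ↔ x = X t y) ∧
    (∀ t x y : ℝ,
      1 / μ ^ 5 * |x| ≤ |(T (x + X t y) - W * t) - (T y - W * 0)| ∧
      |(T (x + X t y) - W * t) - (T y - W * 0)| ≤ μ ^ 5 * |x|) ∧
    (∃ X' : ℝ → ℝ → ℝ, ∀ t y : ℝ,
      HasDerivAt (fun τ => X τ y) (X' t y) t ∧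
      W / μ ^ 5 ≤ X' t y ∧ X' t y ≤ W / (1 / μ ^ 5)) :=
  corrector_profile_solution_general μ hμ ν a W hW T hT X hX
end

section
/- Comparison of the corrector and the adjoint corrector (Lemma 2.5): Let μ ≥ 1, ν, a : ℝ → ℝ continuous with 1/μ ≤ ν(x) ≤ μ and 1/μ ≤ a(x) ≤ μ for all x, W > 0, let T be a corrector and T̃ an adjoint corrector, set m := 1/μ⁵ and τ := 4μ⁷/W, and let X(t;y), Y(t;y) be the associated flows. Then |T(x) − T̃(x)| ≤ τ for all x ∈ ℝ, and |X(t;y) − Y(t;y)| ≤ 2τ/m for all t, y ∈ ℝ. -/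
open MeasureTheory Filter

/-!
The sum of the two fluxes, `F = aν(T' + T̃')`, has derivative `W(T' − T̃')` by the two corrector
equations, so `W(T − T̃) = F − F(0)`. Both fluxes lie in `[0, μ⁷]`, hence `|T − T̃| ≤ 2μ⁷/W`.
For the flows, `T(X) − T(Y) = (T − T̃)(y) − (T − T̃)(Y)` because `T(X)` and `T̃(Y)` advance by the
same amount `Wt`, and `T' ≥ 1/μ⁵` converts this into a bound on `|X − Y|`.
-/

open Set

theorem Elliptic.pos_s7 {μ : ℝ} {f : ℝ → ℝ} (hf : Elliptic μ f) (hμ : 0 < μ) (x : ℝ) : 0 < f x :=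
  (one_div_pos.2 hμ).trans_le (hf x).1

theorem flux_mem_Icc {μ : ℝ} (hμ : 0 < μ) {ν a f : ℝ → ℝ} (hν : Elliptic μ ν) (ha : Elliptic μ a)
    (hf : ∀ x, 1 / μ ^ 5 ≤ f x ∧ f x ≤ μ ^ 5) (x : ℝ) : a x * ν x * f x ∈ Icc 0 (μ ^ 7) := by
  have ha₀ := ha.pos_s7 hμ x
  have hν₀ := hν.pos_s7 hμ x
  have hf₀ : 0 < f x := (one_div_pos.2 (pow_pos hμ 5)).trans_le (hf x).1
  refine ⟨by positivity, ?_⟩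
  calc a x * ν x * f x
      ≤ μ * μ * μ ^ 5 := by gcongr; exacts [(ha x).2, (hν x).2, (hf x).2]
    _ = μ ^ 7 := by ring

theorem IsCorrector.abs_sub_adjoint_le {μ : ℝ} (hμ : 0 < μ) {ν a : ℝ → ℝ} (hν : Elliptic μ ν)
    (ha : Elliptic μ a) {W : ℝ} (hW : 0 < W) {T Tt : ℝ → ℝ} (hT : IsCorrector μ ν a W T)
    (hTt : IsAdjointCorrector μ ν a W Tt) (x : ℝ) : |T x - Tt x| ≤ 2 * μ ^ 7 / W := by
  obtain ⟨hT0, T', hT', hTflux, hT'b⟩ := hT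
  obtain ⟨hTt0, S', hS', hSflux, hS'b⟩ := hTt
  set F : ℝ → ℝ := fun y => a y * ν y * T' y + a y * ν y * S' y
  have hd : ∀ y, HasDerivAt (fun y => W * (T y - Tt y) - F y) 0 y := fun y =>
    ((((hT' y).sub (hS' y)).const_mul W).sub ((hTflux y).add (hSflux y))).congr_deriv (by ring)
  have hconst : W * (T x - Tt x) - F x = W * (T 0 - Tt 0) - F 0 :=
    is_const_of_deriv_eq_zero (fun y => (hd y).differentiableAt) (fun y => (hd y).deriv) x 0
  have hFx := flux_mem_Icc hμ hν ha hT'b x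
  have hGx := flux_mem_Icc hμ hν ha hS'b x
  have hF0 := flux_mem_Icc hμ hν ha hT'b 0
  have hG0 := flux_mem_Icc hμ hν ha hS'b 0
  simp only [mem_Icc] at hFx hGx hF0 hG0
  simp only [F, hT0, hTt0] at hconst
  have hWbound : |W * (T x - Tt x)| ≤ 2 * μ ^ 7 := abs_le.2 ⟨by linarith, by linarith⟩
  rwa [abs_mul, abs_of_pos hW, mul_comm, ← le_div_iff₀ hW] at hWbound

theorem mul_abs_sub_le_abs_image_sub_of_le_deriv {f : ℝ → ℝ} (hf : Differentiable ℝ f) {C : ℝ}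
    (hf' : ∀ x, C ≤ deriv f x) (x y : ℝ) : C * |x - y| ≤ |f x - f y| := by
  wlog hyx : y ≤ x generalizing x y
  · rw [abs_sub_comm x, abs_sub_comm (f x)]
    exact this y x (le_of_not_ge hyx)
  rw [abs_of_nonneg (sub_nonneg.2 hyx)]
  exact (mul_sub_le_image_sub_of_le_deriv hf hf' hyx).trans (le_abs_self _)

theorem IsCorrector.mul_abs_sub_le {μ : ℝ} {ν a : ℝ → ℝ} {W : ℝ} {T : ℝ → ℝ}
    (hT : IsCorrector μ ν a W T) (u v : ℝ) : 1 / μ ^ 5 * |u - v| ≤ |T u - T v| := by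
  obtain ⟨-, T', hT', -, hT'b⟩ := hT
  exact mul_abs_sub_le_abs_image_sub_of_le_deriv (fun x => (hT' x).differentiableAt)
    (fun x => (hT' x).deriv ▸ (hT'b x).1) u v

theorem abs_flow_sub_le {T Tt : ℝ → ℝ} {m τ : ℝ} (hm : 0 < m)
    (hT : ∀ u v, m * |u - v| ≤ |T u - T v|) (hclose : ∀ x, |T x - Tt x| ≤ τ) {s y x z : ℝ}
    (hx : T x = T y + s) (hz : Tt z = Tt y + s) : |x - z| ≤ 2 * τ / m := by
  rw [le_div_iff₀ hm, mul_comm]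
  calc m * |x - z| ≤ |T x - T z| := hT x z
    _ = |(T y - Tt y) - (T z - Tt z)| := by rw [hx]; congr 1; linarith
    _ ≤ |T y - Tt y| + |T z - Tt z| := abs_sub _ _
    _ ≤ 2 * τ := by linarith [hclose y, hclose z]

theorem corrector_adjoint_comparison_general (μ : ℝ) (hμ : 1 ≤ μ) (ν a : ℝ → ℝ)
    (hν : Elliptic μ ν) (ha : Elliptic μ a) (W : ℝ) (hW : 0 < W)
    (T Tt : ℝ → ℝ) (hT : IsCorrector μ ν a W T) (hTt : IsAdjointCorrector μ ν a W Tt)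
    (X Y : ℝ → ℝ → ℝ)
    (hX : ∀ t y : ℝ, T (X t y) = T y + W * t)
    (hY : ∀ t y : ℝ, Tt (Y t y) = Tt y + W * t) :
    (∀ x : ℝ, |T x - Tt x| ≤ 4 * μ ^ 7 / W) ∧
    (∀ t y : ℝ, |X t y - Y t y| ≤ 2 * (4 * μ ^ 7 / W) / (1 / μ ^ 5)) := by
  have hμ₀ : 0 < μ := one_pos.trans_le hμ
  have hclose : ∀ x, |T x - Tt x| ≤ 4 * μ ^ 7 / W := fun x =>
    (hT.abs_sub_adjoint_le hμ₀ hν ha hW hTt x).trans (by gcongr; norm_num)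
  exact ⟨hclose, fun t y =>
    abs_flow_sub_le (by positivity) hT.mul_abs_sub_le hclose (hX t y) (hY t y)⟩

/-- Lemma 2.5: comparison of the corrector and the adjoint corrector:
`|T − T̃| ≤ τ` with `τ = 4μ⁷/W`, and `|X(t;y) − Y(t;y)| ≤ 2τ/m` with `m = 1/μ⁵`. -/
theorem corrector_adjoint_comparison (μ : ℝ) (hμ : 1 ≤ μ) (ν a : ℝ → ℝ)
    (hνc : Continuous ν) (hac : Continuous a)
    (hν : Elliptic μ ν) (ha : Elliptic μ a) (W : ℝ) (hW : 0 < W)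
    (T Tt : ℝ → ℝ) (hT : IsCorrector μ ν a W T) (hTt : IsAdjointCorrector μ ν a W Tt)
    (X Y : ℝ → ℝ → ℝ)
    (hX : ∀ t y : ℝ, T (X t y) = T y + W * t)
    (hY : ∀ t y : ℝ, Tt (Y t y) = Tt y + W * t) :
    (∀ x : ℝ, |T x - Tt x| ≤ 4 * μ ^ 7 / W) ∧
    (∀ t y : ℝ, |X t y - Y t y| ≤ 2 * (4 * μ ^ 7 / W) / (1 / μ ^ 5)) :=
  corrector_adjoint_comparison_general μ hμ ν a hν ha W hW T Tt hT hTt X Y hX hY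
end

section
/- Comparison of the forward and adjoint profiles (Lemma 2.6): For every real μ ≥ 1 there exists a constant C > 0, independent of W, such that the following holds: for all continuous ν, a : ℝ → ℝ with 1/μ ≤ ν(x) ≤ μ and 1/μ ≤ a(x) ≤ μ for all x, every real W > 0, every corrector T and every adjoint corrector T̃, setting f(t,x) := T(x) − Wt and g(t,x) := T̃(x) − Wt, one has |f(t,x) − f(0,y)| ≤ C|g(t,x) − g(0,y)| + C√t for all t > 0 and all x, y ∈ ℝ. -/
open MeasureTheory Filter

/-! The derivative bounds `μ⁻⁵ ≤ T', T̃' ≤ μ⁵` make `T` and `T̃` comparable: `|ΔT| ≤ μ¹⁰ |ΔT̃|`.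
Adding the two corrector equations shows that `W (T − T̃) − aν(T' + T̃')` is constant; as the flux
`aν(T' + T̃')` lies in `[0, 2μ⁷]`, the increments of `T` and `T̃` differ by at most `2μ⁷ / W`.
If `W√t ≤ 1` the drift `Wt` is at most `√t` and the first bound suffices; otherwise `1/W ≤ √t`
and the second one does. -/

theorem mul_sub_le_abs_sub_of_le_hasDerivAt {g g' : ℝ → ℝ} {m : ℝ}
    (hg : ∀ x, HasDerivAt g (g' x) x) (hg' : ∀ x, m ≤ g' x) (x y : ℝ) :
    m * |x - y| ≤ |g x - g y| := by
  wlog hxy : y ≤ x generalizing x y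
  · rw [abs_sub_comm x, abs_sub_comm (g x)]
    exact this y x (le_of_not_ge hxy)
  rw [abs_of_nonneg (sub_nonneg.2 hxy)]
  exact (mul_sub_le_image_sub_of_le_deriv (fun z => (hg z).differentiableAt)
    (fun z => (hg z).deriv ▸ hg' z) hxy).trans (le_abs_self _)

theorem abs_sub_le_div_mul_abs_sub_of_hasDerivAt {f g f' g' : ℝ → ℝ} {m M : ℝ} (hm : 0 < m)
    (hf : ∀ x, HasDerivAt f (f' x) x) (hg : ∀ x, HasDerivAt g (g' x) x)
    (hf' : ∀ x, |f' x| ≤ M) (hg' : ∀ x, m ≤ g' x) (x y : ℝ) :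
    |f x - f y| ≤ M / m * |g x - g y| := by
  have hM : 0 ≤ M := (abs_nonneg _).trans (hf' 0)
  have hlip : |f x - f y| ≤ M * |x - y| := by
    simpa only [Real.norm_eq_abs] using
      Convex.norm_image_sub_le_of_norm_hasDerivWithin_le (s := Set.univ)
        (fun z _ => (hf z).hasDerivWithinAt) (fun z _ => hf' z) convex_univ trivial trivial
  calc |f x - f y| ≤ M * |x - y| := hlip
    _ = M / m * (m * |x - y|) := by field_simp
    _ ≤ M / m * |g x - g y| := by
      gcongr
      exact mul_sub_le_abs_sub_of_le_hasDerivAt hg hg' x y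

theorem abs_sub_mul_le_of_abs_le_mul_of_abs_sub_le_div {d e K L W t : ℝ} (hK : 0 ≤ K)
    (hL : 0 ≤ L) (hW : 0 < W) (ht : 0 < t) (hde : |d| ≤ K * |e|) (hdiff : |d - e| ≤ L / W) :
    |d - W * t| ≤ (K + L + 1) * |e - W * t| + (K + L + 1) * Real.sqrt t := by
  have hsq : Real.sqrt t * Real.sqrt t = t := Real.mul_self_sqrt ht.le
  have hsqt : 0 ≤ Real.sqrt t := Real.sqrt_nonneg t
  have hWt : 0 ≤ W * t := by positivity
  have he : 0 ≤ |e - W * t| := abs_nonneg _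
  rcases le_total (W * Real.sqrt t) 1 with hsmall | hlarge
  · have hdrift : W * t ≤ Real.sqrt t := by nlinarith
    calc |d - W * t| ≤ |d| + W * t := by simpa [abs_of_nonneg hWt] using abs_sub d (W * t)
      _ ≤ K * (|e - W * t| + W * t) + W * t := by
        gcongr
        exact hde.trans (by gcongr; linarith [abs_sub_abs_le_abs_sub e (W * t), abs_of_nonneg hWt])
      _ ≤ (K + L + 1) * |e - W * t| + (K + L + 1) * Real.sqrt t := by nlinarith
  · have hinv : L / W ≤ L * Real.sqrt t := by
      rw [div_le_iff₀ hW]; nlinarith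
    calc |d - W * t| ≤ |e - W * t| + |d - e| := by
          simpa using abs_add_le (e - W * t) (d - e)
      _ ≤ (K + L + 1) * |e - W * t| + (K + L + 1) * Real.sqrt t := by nlinarith

section Correctors

variable {μ W : ℝ} {ν a T Tt : ℝ → ℝ}

theorem IsCorrector.abs_sub_le_pow_mul_abs_sub (hμ : 0 < μ) (hT : IsCorrector μ ν a W T)
    (hTt : IsAdjointCorrector μ ν a W Tt) (x y : ℝ) :
    |T x - T y| ≤ μ ^ 10 * |Tt x - Tt y| := by
  obtain ⟨-, T', hTd, -, hT'⟩ := hT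
  obtain ⟨-, S', hSd, -, hS'⟩ := hTt
  have hpos : 0 < 1 / μ ^ 5 := by positivity
  have h := abs_sub_le_div_mul_abs_sub_of_hasDerivAt hpos hTd hSd
    (fun z => abs_le.2 ⟨by linarith [(hT' z).1, pow_pos hμ 5], (hT' z).2⟩) (fun z => (hS' z).1) x y
  rwa [div_div_eq_mul_div, div_one, ← pow_add] at h

theorem IsCorrector.abs_sub_sub_le (hμ : 0 < μ) (hν : Elliptic μ ν) (ha : Elliptic μ a)
    (hW : 0 < W) (hT : IsCorrector μ ν a W T) (hTt : IsAdjointCorrector μ ν a W Tt) (x y : ℝ) :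
    |(T x - T y) - (Tt x - Tt y)| ≤ 2 * μ ^ 7 / W := by
  obtain ⟨-, T', hTd, hTflux, hT'⟩ := hT
  obtain ⟨-, S', hSd, hSflux, hS'⟩ := hTt
  set flux : ℝ → ℝ := fun z => a z * ν z * T' z + a z * ν z * S' z
  have hflux : ∀ z, 0 ≤ flux z ∧ flux z ≤ 2 * μ ^ 7 := by
    intro z
    have hμ5 : 0 < 1 / μ ^ 5 := by positivity
    have hμ1 : 0 < 1 / μ := by positivity
    obtain ⟨hν₁, hν₂⟩ := hν z
    obtain ⟨ha₁, ha₂⟩ := ha z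
    have haν : 0 ≤ a z * ν z := mul_nonneg (by linarith) (by linarith)
    have haν' : a z * ν z ≤ μ * μ := mul_le_mul ha₂ hν₂ (by linarith) hμ.le
    have hT'₀ : 0 ≤ T' z := by linarith [(hT' z).1]
    have hS'₀ : 0 ≤ S' z := by linarith [(hS' z).1]
    refine ⟨by positivity, ?_⟩
    have := mul_le_mul haν' (hT' z).2 hT'₀ (by positivity)
    have := mul_le_mul haν' (hS' z).2 hS'₀ (by positivity)
    simp only [flux]
    nlinarith
  have hconst : ∀ z, HasDerivAt (fun z => W * (T z - Tt z) - flux z) 0 z := fun z =>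
    ((((hTd z).sub (hSd z)).const_mul W).sub ((hTflux z).add (hSflux z))).congr_deriv (by ring)
  have heq := is_const_of_deriv_eq_zero (fun z => (hconst z).differentiableAt)
    (fun z => (hconst z).deriv) x y
  have hdiff : (T x - T y - (Tt x - Tt y)) * W = flux x - flux y := by linarith
  rw [le_div_iff₀ hW, ← abs_of_pos hW, ← abs_mul, hdiff, abs_sub_le_iff]
  constructor <;> linarith [hflux x, hflux y]

end Correctors

/-- Lemma 2.6: for every `μ ≥ 1` there is `C > 0`, independent of `W`, such that the
profiles `f(t,x) = T(x) − Wt` and `g(t,x) = T̃(x) − Wt` satisfy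
`|f(t,x) − f(0,y)| ≤ C|g(t,x) − g(0,y)| + C√t` for all `t > 0`, `x, y ∈ ℝ`. -/
theorem profile_comparison (μ : ℝ) (hμ : 1 ≤ μ) :
    ∃ C : ℝ, 0 < C ∧ ∀ ν a : ℝ → ℝ, Continuous ν → Continuous a →
      Elliptic μ ν → Elliptic μ a →
      ∀ W : ℝ, 0 < W →
      ∀ T Tt : ℝ → ℝ, IsCorrector μ ν a W T → IsAdjointCorrector μ ν a W Tt →
      ∀ t : ℝ, 0 < t → ∀ x y : ℝ,
        |(T x - W * t) - (T y - W * 0)| ≤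
          C * |(Tt x - W * t) - (Tt y - W * 0)| + C * Real.sqrt t := by
  have hμ0 : 0 < μ := zero_lt_one.trans_le hμ
  refine ⟨μ ^ 10 + 2 * μ ^ 7 + 1, by positivity, ?_⟩
  intro ν a _ _ hν ha W hW T Tt hT hTt t ht x y
  have hprofile : ∀ F : ℝ → ℝ, (F x - W * t) - (F y - W * 0) = (F x - F y) - W * t :=
    fun F => by ring
  rw [hprofile, hprofile]
  exact abs_sub_mul_le_of_abs_le_mul_of_abs_sub_le_div (by positivity) (by positivity) hW ht
    (hT.abs_sub_le_pow_mul_abs_sub hμ0 hTt x y) (hT.abs_sub_sub_le hμ0 hν ha hW hTt x y)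
end

section
/- Laplace transform of the drifted Gaussian kernel (identity used for the Green function bounds, corrected to X ≥ 0): For all real numbers a > 0, b > 0 and X ≥ 0, one has ∫₀^∞ e^{−at}·e^{−b(X−t)²/t}/√t dt = √(π/(a+b))·exp(−2√b(√(a+b) − √b)X). -/
/-!
Substituting `t = u²` and completing the square, `p t + q / t = (√p u - √q / u)² + 2 √(p q)`,
reduces the kernel `exp (-(p t + q / t)) / √t` to the Gaussian `exp (-(c u - d / u)²)`, whose
integral over `(0, ∞)` is `√π / (2 c)` (Cauchy–Schlömilch): `v = c u - d / u` maps `(0, ∞)` onto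
`ℝ` with `dv = (c + d / u²) du`, and the involution `u ↦ d / (c u)` shows that the parts `c du`
and `d / u² du` contribute equally. The drifted kernel is `exp (2 b X)` times the case
`p = a + b`, `q = b X²`.
-/

open MeasureTheory Real Set

theorem integral_Ioi_div_sqrt (f : ℝ → ℝ) :
    ∫ t in Ioi 0, f t / √t = 2 * ∫ u in Ioi 0, f (u ^ 2) := by
  rw [← integral_comp_rpow_Ioi _ two_ne_zero, ← integral_const_mul]
  refine setIntegral_congr_fun measurableSet_Ioi fun u (hu : 0 < u) => ?_
  norm_num [rpow_two, sqrt_sq hu.le]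
  field_simp

theorem image_div_Ioi {k : ℝ} (hk : 0 < k) : (fun s : ℝ => k / s) '' Ioi 0 = Ioi 0 := by
  refine (image_subset_iff.2 fun s (hs : 0 < s) => div_pos hk hs).antisymm fun u (hu : 0 < u) => ?_
  exact ⟨k / u, div_pos hk hu, div_div_cancel₀ hk.ne'⟩

theorem integral_Ioi_comp_div (f : ℝ → ℝ) {k : ℝ} (hk : 0 < k) :
    ∫ s in Ioi 0, k / s ^ 2 * f (k / s) = ∫ u in Ioi 0, f u := by
  have hderiv : ∀ s ∈ Ioi (0 : ℝ), HasDerivWithinAt (fun s => k / s) (-(k / s ^ 2)) (Ioi 0) s :=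
    fun s (hs : 0 < s) => by
      simpa [div_eq_mul_inv, neg_div] using ((hasDerivAt_inv hs.ne').const_mul k).hasDerivWithinAt
  have hinj : InjOn (fun s : ℝ => k / s) (Ioi 0) := fun s _ s' _ h =>
    inv_injective (mul_left_cancel₀ hk.ne' (by simpa [div_eq_mul_inv] using h))
  have hsubst := integral_image_eq_integral_abs_deriv_smul measurableSet_Ioi hderiv hinj f
  rw [image_div_Ioi hk] at hsubst
  rw [hsubst]
  refine setIntegral_congr_fun measurableSet_Ioi fun s (hs : 0 < s) => ?_
  rw [abs_neg, abs_of_pos (by positivity), smul_eq_mul]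

theorem hasDerivAt_mul_sub_div (c d : ℝ) {u : ℝ} (hu : u ≠ 0) :
    HasDerivAt (fun u => c * u - d / u) (c + d / u ^ 2) u := by
  have hinv := (hasDerivAt_inv hu).const_mul d
  simp only [← div_eq_mul_inv] at hinv
  exact (((hasDerivAt_id' u).const_mul c).sub hinv).congr_deriv (by ring)

section MulSubDiv

variable {c d : ℝ}

theorem injOn_mul_sub_div (hc : 0 < c) (hd : 0 ≤ d) :
    InjOn (fun u : ℝ => c * u - d / u) (Ioi 0) := by
  intro u (hu : 0 < u) v (hv : 0 < v) huv
  have hfactor : (u - v) * (c * u * v + d) = 0 := by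
    field_simp at huv
    linear_combination huv
  exact sub_eq_zero.1 ((mul_eq_zero.1 hfactor).resolve_right (by positivity))

theorem image_mul_sub_div_Ioi (hc : 0 < c) (hd : 0 < d) :
    (fun u : ℝ => c * u - d / u) '' Ioi 0 = univ := by
  refine eq_univ_of_forall fun v => ?_
  set s := √(v ^ 2 + 4 * c * d)
  have hs : s ^ 2 = v ^ 2 + 4 * c * d := sq_sqrt (by positivity)
  have hvs : |v| < s := by
    rw [← sqrt_sq_eq_abs]
    exact sqrt_lt_sqrt (sq_nonneg v) (by linarith [mul_pos hc hd])
  have hpos : 0 < v + s := by linarith [neg_abs_le v]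
  -- the positive root of `c u ^ 2 - v u - d = 0`
  refine ⟨(v + s) / (2 * c), div_pos hpos (by positivity), ?_⟩
  field_simp
  linear_combination hs

theorem integral_Ioi_add_div_sq_mul_comp_mul_sub_div (h : ℝ → ℝ) (hc : 0 < c) (hd : 0 < d) :
    ∫ u in Ioi 0, (c + d / u ^ 2) * h (c * u - d / u) = ∫ x, h x := by
  have hsubst := integral_image_eq_integral_abs_deriv_smul measurableSet_Ioi
    (fun u (hu : 0 < u) => (hasDerivAt_mul_sub_div c d hu.ne').hasDerivWithinAt)
    (injOn_mul_sub_div hc hd.le) h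
  rw [image_mul_sub_div_Ioi hc hd, setIntegral_univ] at hsubst
  refine (setIntegral_congr_fun measurableSet_Ioi fun u (hu : 0 < u) => ?_).trans hsubst.symm
  rw [abs_of_pos (by positivity), smul_eq_mul]

theorem integrableOn_Ioi_add_div_sq_mul_comp_mul_sub_div {h : ℝ → ℝ} (hint : Integrable h)
    (hc : 0 < c) (hd : 0 < d) :
    IntegrableOn (fun u => (c + d / u ^ 2) * h (c * u - d / u)) (Ioi 0) := by
  have hsubst := integrableOn_image_iff_integrableOn_abs_deriv_smul measurableSet_Ioi
    (fun u (hu : 0 < u) => (hasDerivAt_mul_sub_div c d hu.ne').hasDerivWithinAt)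
    (injOn_mul_sub_div hc hd.le) h
  rw [image_mul_sub_div_Ioi hc hd, integrableOn_univ] at hsubst
  refine (hsubst.1 hint).congr_fun (fun u (hu : 0 < u) => ?_) measurableSet_Ioi
  dsimp only
  rw [abs_of_pos (by positivity), smul_eq_mul]

theorem integrableOn_Ioi_mul_comp_mul_sub_div {h : ℝ → ℝ} (hint : Integrable h) (hc : 0 < c)
    (hd : 0 < d) : IntegrableOn (fun u => c * h (c * u - d / u)) (Ioi 0) := by
  have hweight : ContinuousOn (fun u : ℝ => c / (c + d / u ^ 2)) (Ioi 0) :=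
    continuousOn_const.div (continuousOn_const.add (continuousOn_const.div (continuousOn_pow 2)
      fun u (hu : 0 < u) => by positivity)) fun u (hu : 0 < u) => by positivity
  refine IntegrableOn.congr_fun
    ((integrableOn_Ioi_add_div_sq_mul_comp_mul_sub_div hint hc hd).bdd_mul (c := 1)
      (hweight.aestronglyMeasurable measurableSet_Ioi) ?_)
    (fun u (hu : 0 < u) => ?_) measurableSet_Ioi
  · filter_upwards [ae_restrict_mem measurableSet_Ioi] with u (hu : 0 < u)
    rw [norm_of_nonneg (by positivity), div_le_one (by positivity)]
    exact le_add_of_nonneg_right (by positivity)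
  · field_simp

theorem integral_Ioi_div_sq_mul_comp_mul_sub_div {h : ℝ → ℝ} (heven : h.Even) (hc : 0 < c)
    (hd : 0 < d) :
    ∫ u in Ioi 0, d / u ^ 2 * h (c * u - d / u) = ∫ u in Ioi 0, c * h (c * u - d / u) := by
  rw [← integral_Ioi_comp_div (fun u => c * h (c * u - d / u)) (div_pos hd hc)]
  refine setIntegral_congr_fun measurableSet_Ioi fun u (hu : 0 < u) => ?_
  have hflip : c * (d / c / u) - d / (d / c / u) = -(c * u - d / u) := by
    field_simp
    ring
  rw [hflip, heven]
  field_simp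

theorem integral_Ioi_comp_mul_sub_div {h : ℝ → ℝ} (heven : h.Even) (hint : Integrable h)
    (hc : 0 < c) (hd : 0 ≤ d) :
    ∫ u in Ioi 0, h (c * u - d / u) = (∫ x, h x) / (2 * c) := by
  rcases hd.eq_or_lt with rfl | hd
  · have habs : ∀ x, h |x| = h x := fun x => by
      rcases abs_choice x with hx | hx <;> simp [hx, heven x]
    have hhalf : ∫ x, h x = 2 * ∫ x in Ioi 0, h x := by
      simpa only [habs] using integral_comp_abs (f := h)
    simp only [zero_div, sub_zero]
    rw [integral_comp_mul_left_Ioi h 0 hc, mul_zero, hhalf, smul_eq_mul]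
    field_simp
  have hsplit : ∫ u in Ioi 0, d / u ^ 2 * h (c * u - d / u) =
      (∫ u in Ioi 0, (c + d / u ^ 2) * h (c * u - d / u)) -
        ∫ u in Ioi 0, c * h (c * u - d / u) := by
    rw [← integral_sub (integrableOn_Ioi_add_div_sq_mul_comp_mul_sub_div hint hc hd)
      (integrableOn_Ioi_mul_comp_mul_sub_div hint hc hd)]
    simp only [add_mul, add_sub_cancel_left]
  rw [integral_Ioi_div_sq_mul_comp_mul_sub_div heven hc hd,
    integral_Ioi_add_div_sq_mul_comp_mul_sub_div h hc hd, integral_const_mul] at hsplit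
  rw [eq_div_iff (by positivity)]
  linarith

end MulSubDiv

theorem integral_Ioi_exp_neg_mul_add_div_div_sqrt {p q : ℝ} (hp : 0 < p) (hq : 0 ≤ q) :
    ∫ t in Ioi 0, exp (-(p * t + q / t)) / √t = √(π / p) * exp (-2 * √(p * q)) := by
  have hgauss : ∫ u in Ioi 0, exp (-(√p * u - √q / u) ^ 2) = √π / (2 * √p) := by
    have h := integral_Ioi_comp_mul_sub_div (h := fun x => exp (-x ^ 2)) (fun x => by simp)
      (by simpa using integrable_exp_neg_mul_sq one_pos) (sqrt_pos.2 hp) (sqrt_nonneg q)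
    have hG : ∫ x, exp (-x ^ 2) = √π := by simpa using integral_gaussian 1
    simpa [hG] using h
  have hsquare : ∀ u ∈ Ioi (0 : ℝ),
      exp (-(p * u ^ 2 + q / u ^ 2)) = exp (-2 * √(p * q)) * exp (-(√p * u - √q / u) ^ 2) :=
    fun u (hu : 0 < u) => by
      rw [← exp_add, sqrt_mul hp.le]
      congr 1
      field_simp
      linear_combination u ^ 4 * sq_sqrt hp.le + sq_sqrt hq
  rw [integral_Ioi_div_sqrt, setIntegral_congr_fun measurableSet_Ioi hsquare, integral_const_mul,
    hgauss, sqrt_div' _ hp.le]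
  field_simp

/-- Laplace transform of the drifted Gaussian kernel: for `a, b > 0` and `X ≥ 0`,
`∫₀^∞ e^{−at}e^{−b(X−t)²/t}/√t dt = √(π/(a+b))·e^{−2√b(√(a+b)−√b)X}`. -/
theorem laplace_drifted_gaussian (a b X : ℝ) (ha : 0 < a) (hb : 0 < b) (hX : 0 ≤ X) :
    ∫ t in Set.Ioi (0 : ℝ), Real.exp (-a * t) * Real.exp (-b * (X - t) ^ 2 / t) / Real.sqrt t =
      Real.sqrt (Real.pi / (a + b)) *
        Real.exp (-2 * Real.sqrt b * (Real.sqrt (a + b) - Real.sqrt b) * X) := by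
  have hexpand : ∀ t ∈ Ioi (0 : ℝ), exp (-a * t) * exp (-b * (X - t) ^ 2 / t) / √t =
      exp (2 * b * X) * (exp (-((a + b) * t + b * X ^ 2 / t)) / √t) :=
    fun t (ht : 0 < t) => by
      rw [mul_div_assoc', ← exp_add, ← exp_add]
      congr 2
      field_simp
      ring
  have hroot : √((a + b) * (b * X ^ 2)) = √(a + b) * √b * X := by
    rw [sqrt_mul (by positivity), sqrt_mul hb.le, sqrt_sq hX, mul_assoc]
  rw [setIntegral_congr_fun measurableSet_Ioi hexpand, integral_const_mul,
    integral_Ioi_exp_neg_mul_add_div_div_sqrt (by positivity) (by positivity), hroot,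
    mul_left_comm, ← exp_add]
  congr 2
  linear_combination -2 * X * mul_self_sqrt hb.le
end
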